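/- arXiv:2412.15049 — 5 statements merged into one kernel-verified Lean document; each statement's English description precedes it below -/
import Mathlib

section
/- In the Gaussian simple linear regression setup, the slope estimator β̂₁ := w^{−1}·((1/n)Σ_{i=1}^n Y_i m_i − Ȳ·m̄), where Ȳ = (1/n)Σ_{i=1}^n Y_i, has the normal distribution N(β₁, σ²/(n w)); that is, the pushforward of ℙ under β̂₁ is the Gaussian measure on ℝ with mean β₁ and variance σ²/(n w). -/
open MeasureTheory ProbabilityTheory Real
open scoped NNReal

lemma conv_pdf_real {u v : ℝ≥0} (hu : u ≠ 0) (hv : v ≠ 0) (a b z : ℝ) :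
    ∫ x, gaussianPDFReal a u x * gaussianPDFReal (b + x) v z
      = gaussianPDFReal (a + b) (u + v) z := by
  have hu' : (0:ℝ) < u := lt_of_le_of_ne u.coe_nonneg (by exact_mod_cast hu.symm)
  have hv' : (0:ℝ) < v := lt_of_le_of_ne v.coe_nonneg (by exact_mod_cast hv.symm)
  have hpi : (0:ℝ) < π := pi_pos
  set c : ℝ := z - a - b with hc
  set k : ℝ := ((u:ℝ) + v) / (2 * u * v) with hk
  have hk' : (0:ℝ) < k := by positivity
  set d : ℝ := (u:ℝ) * c / ((u:ℝ) + v) with hd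
  have key : ∀ x : ℝ, gaussianPDFReal a u x * gaussianPDFReal (b + x) v z
      = ((√(2*π*u))⁻¹ * (√(2*π*v))⁻¹ * rexp (-c^2 / (2*((u:ℝ)+v))))
        * rexp (-k * (x - (a + d))^2) := by
    intro x
    simp only [gaussianPDFReal]
    rw [show (√(2*π*(u:ℝ)))⁻¹ * rexp (-(x-a)^2/(2*u)) * ((√(2*π*(v:ℝ)))⁻¹ * rexp (-(z-(b+x))^2/(2*v)))
        = (√(2*π*(u:ℝ)))⁻¹ * (√(2*π*(v:ℝ)))⁻¹ * (rexp (-(x-a)^2/(2*u)) * rexp (-(z-(b+x))^2/(2*v))) by ring,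
      ← Real.exp_add]
    rw [mul_assoc ((√(2*π*(u:ℝ)))⁻¹ * (√(2*π*(v:ℝ)))⁻¹), ← Real.exp_add]
    congr 1
    have huv : (u:ℝ) + v ≠ 0 := by positivity
    rw [hd, hk, hc]
    congr 1
    field_simp
    ring
  rw [integral_congr_ae (ae_of_all _ key), integral_const_mul, integral_sub_right_eq_self (fun x => rexp (-k * x^2)) (a+d), integral_gaussian]
  -- now pure constant algebra
  rw [gaussianPDFReal]
  have h1 : √(π / k) = √(2*π*(u:ℝ)) * √(2*π*(v:ℝ)) / √(2*π*((u:ℝ)+v)) := by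
    rw [← Real.sqrt_mul (by positivity), ← Real.sqrt_div (by positivity)]
    congr 1
    rw [hk]
    field_simp
  rw [h1]
  have h2 : √(2*π*(u:ℝ)) ≠ 0 := by positivity
  have h3 : √(2*π*(v:ℝ)) ≠ 0 := by positivity
  have h4 : √(2*π*((u:ℝ)+v)) ≠ 0 := by positivity
  have h5 : rexp (-c^2/(2*((u:ℝ)+v))) = rexp (-(z-(a+b))^2 / (2*((u:ℝ)+v))) := by
    rw [hc]; ring_nf
  push_cast
  rw [h5]
  field_simp

lemma meas_unc {v : ℝ≥0} (b : ℝ) :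
    Measurable (fun p : ℝ × ℝ => gaussianPDF (b + p.1) v p.2) := by
  have h : (fun p : ℝ × ℝ => gaussianPDF (b + p.1) v p.2)
      = fun p : ℝ × ℝ => gaussianPDF 0 v (p.2 - (b + p.1)) := by
    funext p
    rw [gaussianPDF, gaussianPDF, gaussianPDFReal_sub, zero_add]
  rw [h]
  exact (measurable_gaussianPDF 0 v).comp
    (measurable_snd.sub (measurable_const.add measurable_fst))

lemma conv_pdf_lintegral {u v : ℝ≥0} (hu : u ≠ 0) (hv : v ≠ 0) (a b z : ℝ) :
    ∫⁻ x, gaussianPDF a u x * gaussianPDF (b + x) v z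
      = gaussianPDF (a + b) (u + v) z := by
  have hmeas2 : Measurable (fun x : ℝ => gaussianPDFReal (b + x) v z) := by
    have h : (fun x : ℝ => gaussianPDFReal (b + x) v z)
        = fun x : ℝ => gaussianPDFReal 0 v (z - (b + x)) := by
      funext x
      rw [gaussianPDFReal_sub, zero_add]
    rw [h]
    exact (measurable_gaussianPDFReal 0 v).comp
      (measurable_const.sub (measurable_const.add measurable_id))
  have hint : Integrable (fun x => gaussianPDFReal a u x * gaussianPDFReal (b + x) v z) := by
    have h : (fun x => gaussianPDFReal a u x * gaussianPDFReal (b + x) v z)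
        = fun x => gaussianPDFReal (b + x) v z * gaussianPDFReal a u x := by
      funext x; ring
    rw [h]
    refine (integrable_gaussianPDFReal a u).bdd_mul hmeas2.aestronglyMeasurable
      (c := (√(2*Real.pi*(v:ℝ)))⁻¹) (ae_of_all _ fun x => ?_)
    rw [Real.norm_eq_abs, abs_of_nonneg (gaussianPDFReal_nonneg _ _ _), gaussianPDFReal]
    have h1 : rexp (-(z - (b + x))^2 / (2*(v:ℝ))) ≤ 1 := by
      rw [Real.exp_le_one_iff]
      have hv' : (0:ℝ) < v := lt_of_le_of_ne v.coe_nonneg (by exact_mod_cast hv.symm)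
      apply div_nonpos_of_nonpos_of_nonneg (neg_nonpos.mpr (sq_nonneg _)) (by positivity)
    calc (√(2*Real.pi*(v:ℝ)))⁻¹ * rexp (-(z - (b + x))^2 / (2*(v:ℝ)))
        ≤ (√(2*Real.pi*(v:ℝ)))⁻¹ * 1 := by
          apply mul_le_mul_of_nonneg_left h1 (by positivity)
      _ = (√(2*Real.pi*(v:ℝ)))⁻¹ := mul_one _
  simp only [gaussianPDF]
  simp_rw [← ENNReal.ofReal_mul (gaussianPDFReal_nonneg _ _ _)]
  rw [← ofReal_integral_eq_lintegral_ofReal hint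
    (ae_of_all _ fun x => mul_nonneg (gaussianPDFReal_nonneg _ _ _) (gaussianPDFReal_nonneg _ _ _)),
    conv_pdf_real hu hv a b z]

lemma gaussian_conv (u v : ℝ≥0) (a b : ℝ) :
    Measure.map (fun p : ℝ × ℝ => p.1 + p.2)
        ((gaussianReal a u).prod (gaussianReal b v)) = gaussianReal (a + b) (u + v) := by
  by_cases hu : u = 0
  · subst hu
    rw [gaussianReal_zero_var, Measure.dirac_prod,
      Measure.map_map measurable_add measurable_prodMk_left]
    have h : ((fun p : ℝ × ℝ => p.1 + p.2) ∘ Prod.mk a) = (a + ·) := rfl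
    rw [h, gaussianReal_map_const_add, add_comm b a, zero_add]
  by_cases hv : v = 0
  · subst hv
    rw [gaussianReal_zero_var, Measure.prod_dirac,
      Measure.map_map measurable_add measurable_prodMk_right]
    have h : ((fun p : ℝ × ℝ => p.1 + p.2) ∘ (fun x : ℝ => (x, b))) = (· + b) := rfl
    rw [h, gaussianReal_map_add_const, add_zero]
  have huv : u + v ≠ 0 := by simp [hu]
  ext s hs
  rw [Measure.map_apply measurable_add hs, Measure.prod_apply (measurable_add hs)]
  have hstep : ∀ x : ℝ, gaussianReal b v (Prod.mk x ⁻¹' ((fun p : ℝ × ℝ => p.1 + p.2) ⁻¹' s))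
      = ∫⁻ z in s, gaussianPDF (b + x) v z := by
    intro x
    have h : (Prod.mk x ⁻¹' ((fun p : ℝ × ℝ => p.1 + p.2) ⁻¹' s)) = (x + ·) ⁻¹' s := rfl
    rw [h, ← Measure.map_apply (measurable_const_add x) hs, gaussianReal_map_const_add,
      gaussianReal_apply _ hv]
  simp_rw [hstep]
  have hmg : Measurable (fun x : ℝ => ∫⁻ z in s, gaussianPDF (b + x) v z) :=
    Measurable.lintegral_prod_right (f := fun x z => gaussianPDF (b + x) v z) (meas_unc b)
  rw [gaussianReal_of_var_ne_zero _ hu,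
    lintegral_withDensity_eq_lintegral_mul _ (measurable_gaussianPDF a u) hmg]
  simp only [Pi.mul_apply]
  have hpull : ∀ x : ℝ, gaussianPDF a u x * ∫⁻ z in s, gaussianPDF (b + x) v z
      = ∫⁻ z in s, gaussianPDF a u x * gaussianPDF (b + x) v z := by
    intro x
    exact (lintegral_const_mul _ ((meas_unc (v := v) b).comp (measurable_prodMk_left : Measurable (Prod.mk x)))).symm
  simp_rw [hpull]
  rw [lintegral_lintegral_swap]
  swap
  · exact ((measurable_gaussianPDF a u).comp measurable_fst |>.mul (meas_unc b)).aemeasurable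
  have hinner : ∀ z : ℝ, ∫⁻ x, gaussianPDF a u x * gaussianPDF (b + x) v z
      = gaussianPDF (a + b) (u + v) z := fun z => conv_pdf_lintegral hu hv a b z
  simp_rw [hinner]
  rw [gaussianReal_apply _ huv]

lemma map_add_of_indep {Ω : Type*} [MeasurableSpace Ω] (P : Measure Ω) [IsProbabilityMeasure P]
    {X Y : Ω → ℝ} (hX : Measurable X) (hY : Measurable Y) (hXY : IndepFun X Y P)
    {a b : ℝ} {u v : ℝ≥0} (hlX : P.map X = gaussianReal a u) (hlY : P.map Y = gaussianReal b v) :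
    P.map (fun ω => X ω + Y ω) = gaussianReal (a + b) (u + v) := by
  have h := (indepFun_iff_map_prod_eq_prod_map_map hX.aemeasurable hY.aemeasurable).mp hXY
  have h2 : (fun ω => X ω + Y ω) = (fun p : ℝ × ℝ => p.1 + p.2) ∘ (fun ω => (X ω, Y ω)) := rfl
  rw [h2, ← Measure.map_map measurable_add (hX.prodMk hY), h, hlX, hlY, gaussian_conv]

lemma map_sum_gauss {Ω : Type*} [MeasurableSpace Ω] (P : Measure Ω) [IsProbabilityMeasure P]
    {n : ℕ} (ε : Fin n → Ω → ℝ) (hmeas : ∀ i, Measurable (ε i))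
    (hindep : iIndepFun ε P) (σ : ℝ≥0)
    (hlaw : ∀ i, P.map (ε i) = gaussianReal 0 σ) (c : Fin n → ℝ) (s : Finset (Fin n)) :
    P.map (fun ω => ∑ i ∈ s, c i * ε i ω)
      = gaussianReal 0 (∑ i ∈ s, ((c i)^2).toNNReal * σ) := by
  classical
  set η : Fin n → Ω → ℝ := fun j ω => c j * ε j ω with hη
  have hmeasη : ∀ j, Measurable (η j) := fun j => (hmeas j).const_mul (c j)
  have hindepη : iIndepFun η P := by
    exact hindep.comp (fun j x => c j * x) (fun j => measurable_const_mul (c j))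
  have hlawη : ∀ j, P.map (η j) = gaussianReal 0 (((c j)^2).toNNReal * σ) := by
    intro j
    have h0 : η j = (fun x => c j * x) ∘ ε j := rfl
    have hco : (⟨(c j)^2, sq_nonneg _⟩ : ℝ≥0) = ((c j)^2).toNNReal := by
      ext; simp [Real.coe_toNNReal _ (sq_nonneg (c j))]
    rw [h0, ← Measure.map_map (measurable_const_mul (c j)) (hmeas j), hlaw j,
      gaussianReal_map_const_mul, mul_zero]
    exact congrArg (fun t => gaussianReal 0 (t * σ)) hco
  induction s using Finset.induction_on with
  | empty =>
      simp only [Finset.sum_empty]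
      rw [Measure.map_const, gaussianReal_zero_var]
      simp
  | @insert i s hi ih =>
      have hsum : (fun ω => ∑ j ∈ insert i s, c j * ε j ω)
          = fun ω => η i ω + ∑ j ∈ s, c j * ε j ω := by
        funext ω; rw [Finset.sum_insert hi]
      rw [hsum, Finset.sum_insert hi]
      have hYmeas : Measurable (fun ω => ∑ j ∈ s, c j * ε j ω) := by
        apply Finset.measurable_sum
        exact fun j _ => hmeasη j
      have hind : IndepFun (η i) (fun ω => ∑ j ∈ s, c j * ε j ω) P := by
        have h := (hindepη.indepFun_finset_sum_of_notMem hmeasη hi).symm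
        have h2 : (∑ j ∈ s, η j) = fun ω => ∑ j ∈ s, c j * ε j ω := by
          funext ω; simp [hη, Finset.sum_apply]
        rwa [h2] at h
      have := map_add_of_indep P (hmeasη i) hYmeas hind (hlawη i) ih
      rw [this, add_zero]

theorem stmt3 {Ω : Type*} [MeasurableSpace Ω] (P : Measure Ω) [IsProbabilityMeasure P]
    (n : ℕ) (hn : 3 ≤ n) (m : Fin n → ℝ)
    (mbar w : ℝ) (hmbar : mbar = (1 / (n : ℝ)) * ∑ i, m i)
    (hw : w = (1 / (n : ℝ)) * ∑ i, (m i) ^ 2 - mbar ^ 2) (hwpos : 0 < w)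
    (β₀ β₁ σ2 : ℝ) (hσ2 : 0 < σ2)
    (ε : Fin n → Ω → ℝ) (hmeas : ∀ i, Measurable (ε i))
    (hindep : iIndepFun ε P)
    (hlaw : ∀ i, Measure.map (ε i) P = gaussianReal 0 σ2.toNNReal)
    (Y : Fin n → Ω → ℝ) (hY : ∀ i ω, Y i ω = β₀ + β₁ * m i + ε i ω) :
    Measure.map
        (fun ω => w⁻¹ * ((1 / (n : ℝ)) * ∑ i, Y i ω * m i
          - ((1 / (n : ℝ)) * ∑ i, Y i ω) * mbar)) P
      = gaussianReal β₁ (σ2 / ((n : ℝ) * w)).toNNReal := by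
  have hn0 : (n : ℝ) ≠ 0 := by
    have : 0 < n := lt_of_lt_of_le (by norm_num) hn
    exact_mod_cast this.ne'
  have hw0 : w ≠ 0 := hwpos.ne'
  set c : Fin n → ℝ := fun i => w⁻¹ * ((m i - mbar) / n) with hc
  have hS1 : ∑ i, m i = n * mbar := by rw [hmbar]; field_simp
  have hS2 : ∑ i, (m i)^2 = (n : ℝ) * (w + mbar^2) := by
    have := hw
    field_simp at this ⊢
    linarith [this]
  have hfun : (fun ω => w⁻¹ * ((1 / (n : ℝ)) * ∑ i, Y i ω * m i
        - ((1 / (n : ℝ)) * ∑ i, Y i ω) * mbar))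
      = fun ω => (∑ i, c i * ε i ω) + β₁ := by
    funext ω
    have e1 : ∑ i, Y i ω * m i
        = β₀ * (∑ i, m i) + β₁ * (∑ i, (m i)^2) + ∑ i, ε i ω * m i := by
      simp only [hY, Finset.mul_sum]
      rw [← Finset.sum_add_distrib, ← Finset.sum_add_distrib]
      exact Finset.sum_congr rfl fun i _ => by ring
    have e2 : ∑ i, Y i ω = (n : ℝ) * β₀ + β₁ * (∑ i, m i) + ∑ i, ε i ω := by
      simp only [hY]
      rw [Finset.sum_add_distrib, Finset.sum_add_distrib, Finset.sum_const,
        Finset.card_univ, Fintype.card_fin, nsmul_eq_mul, ← Finset.mul_sum]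
    have e3 : ∑ i, c i * ε i ω
        = w⁻¹ * (n : ℝ)⁻¹ * ((∑ i, ε i ω * m i) - mbar * ∑ i, ε i ω) := by
      rw [Finset.mul_sum, ← Finset.sum_sub_distrib]
      simp only [Finset.mul_sum, ← Finset.sum_sub_distrib]
      exact Finset.sum_congr rfl fun i _ => by simp only [hc]; field_simp
    rw [e1, e2, e3, hS1, hS2]
    field_simp
    ring
  rw [hfun]
  have hsum_meas : Measurable (fun ω => ∑ i, c i * ε i ω) :=
    Finset.measurable_sum _ fun i _ => (hmeas i).const_mul (c i)
  have h4 : (fun ω => (∑ i, c i * ε i ω) + β₁)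
      = (· + β₁) ∘ (fun ω => ∑ i, c i * ε i ω) := rfl
  rw [h4, ← Measure.map_map (measurable_add_const β₁) hsum_meas,
    map_sum_gauss P ε hmeas hindep _ hlaw c Finset.univ,
    gaussianReal_map_add_const, zero_add]
  congr 1
  have key : ∑ i, (m i - mbar)^2 = (n : ℝ) * w := by
    have e : ∀ i : Fin n, (m i - mbar)^2 = (m i)^2 - 2*mbar*(m i) + mbar^2 := fun i => by ring
    rw [Finset.sum_congr rfl fun i _ => e i]
    rw [Finset.sum_add_distrib, Finset.sum_sub_distrib, ← Finset.mul_sum, hS1, hS2,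
      Finset.sum_const, Finset.card_univ, Fintype.card_fin, nsmul_eq_mul]
    ring
  apply NNReal.coe_injective
  rw [NNReal.coe_sum, Real.coe_toNNReal _ (by positivity)]
  simp only [NNReal.coe_mul]
  have e5 : ∀ i : Fin n, ((((c i)^2).toNNReal : ℝ) * (σ2.toNNReal : ℝ))
      = (w⁻¹ * (n:ℝ)⁻¹)^2 * σ2 * (m i - mbar)^2 := fun i => by
    rw [Real.coe_toNNReal _ (sq_nonneg _), Real.coe_toNNReal _ hσ2.le, hc]
    field_simp
  rw [Finset.sum_congr rfl fun i _ => e5 i, ← Finset.mul_sum, key]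
  field_simp
end

section
/- In the Gaussian simple linear regression setup, the intercept estimator β̂₀ := Ȳ − β̂₁·m̄, where Ȳ = (1/n)Σ_{i=1}^n Y_i and β̂₁ = w^{−1}·((1/n)Σ_{i=1}^n Y_i m_i − Ȳ·m̄), has the normal distribution N(β₀, (σ²/n)·(1 + m̄²/w)); that is, the pushforward of ℙ under β̂₀ is the Gaussian measure on ℝ with mean β₀ and variance (σ²/n)·(1 + m̄²/w). -/
open MeasureTheory ProbabilityTheory Real NNReal

lemma gaussianPDFReal_conv (μ₁ μ₂ : ℝ) {v₁ v₂ : ℝ≥0} (h₁ : v₁ ≠ 0) (h₂ : v₂ ≠ 0) (z : ℝ) :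
    ∫ x, gaussianPDFReal μ₁ v₁ x * gaussianPDFReal μ₂ v₂ (z - x)
      = gaussianPDFReal (μ₁ + μ₂) (v₁ + v₂) z := by
  have hv₁ : (0:ℝ) < v₁ := lt_of_le_of_ne (v₁.coe_nonneg) (by exact_mod_cast (Ne.symm h₁))
  have hv₂ : (0:ℝ) < v₂ := lt_of_le_of_ne (v₂.coe_nonneg) (by exact_mod_cast (Ne.symm h₂))
  have hv₁₂ : (0:ℝ) < (v₁:ℝ) + v₂ := by linarith
  set t : ℝ := z - μ₁ - μ₂ with ht
  set b : ℝ := ((v₁:ℝ) + v₂) / (2 * v₁ * v₂) with hb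
  have hbpos : 0 < b := by positivity
  set c : ℝ := μ₁ + (v₁:ℝ) * t / ((v₁:ℝ) + v₂) with hc
  have key : ∀ x : ℝ,
      gaussianPDFReal μ₁ v₁ x * gaussianPDFReal μ₂ v₂ (z - x)
        = ((√(2 * π * v₁))⁻¹ * (√(2 * π * v₂))⁻¹ * rexp (- t^2 / (2 * ((v₁:ℝ) + v₂))))
          * rexp (- b * (x - c)^2) := by
    intro x
    simp only [gaussianPDFReal]
    have hx : rexp (- (x - μ₁)^2 / (2 * (v₁:ℝ))) * rexp (- (z - x - μ₂)^2 / (2 * (v₂:ℝ)))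
        = rexp (- t^2 / (2 * ((v₁:ℝ) + v₂))) * rexp (- b * (x - c)^2) := by
      rw [← Real.exp_add, ← Real.exp_add]
      congr 1
      have n1 : (v₁:ℝ) ≠ 0 := ne_of_gt hv₁
      have n2 : (v₂:ℝ) ≠ 0 := ne_of_gt hv₂
      have n12 : (v₁:ℝ) + v₂ ≠ 0 := ne_of_gt hv₁₂
      rw [hc, hb, ht]
      field_simp
      ring
    calc (√(2 * π * v₁))⁻¹ * rexp (- (x - μ₁)^2 / (2 * (v₁:ℝ)))
          * ((√(2 * π * v₂))⁻¹ * rexp (- (z - x - μ₂)^2 / (2 * (v₂:ℝ))))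
        = (√(2 * π * v₁))⁻¹ * (√(2 * π * v₂))⁻¹
            * (rexp (- (x - μ₁)^2 / (2 * (v₁:ℝ))) * rexp (- (z - x - μ₂)^2 / (2 * (v₂:ℝ)))) := by
          ring
      _ = _ := by rw [hx]; ring
  rw [integral_congr_ae (ae_of_all _ key), MeasureTheory.integral_const_mul,
    integral_sub_right_eq_self (fun a => rexp (- b * a ^ 2)) c, integral_gaussian]
  simp only [gaussianPDFReal]
  have h1 : √(π / b) = √(2*π*v₁) * √(2*π*v₂) / √(2*π*((v₁:ℝ)+v₂)) := by
    rw [← Real.sqrt_mul (by positivity), ← Real.sqrt_div (by positivity)]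
    congr 1
    field_simp [hb]
    rw [hb]; field_simp
  rw [h1]
  have e1 : √(2*π*v₁) ≠ 0 := by positivity
  have e2 : √(2*π*v₂) ≠ 0 := by positivity
  have : z - (μ₁ + μ₂) = t := by ring
  rw [NNReal.coe_add, this]
  field_simp

lemma gaussianPDFReal_le (μ : ℝ) (v : ℝ≥0) (x : ℝ) :
    gaussianPDFReal μ v x ≤ (√(2 * π * v))⁻¹ := by
  rw [gaussianPDFReal]
  have h1 : rexp (- (x - μ)^2 / (2 * v)) ≤ 1 := by
    rw [Real.exp_le_one_iff]
    rcases eq_or_ne (v : ℝ) 0 with h | h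
    · simp [h]
    · apply div_nonpos_of_nonpos_of_nonneg
      · simp [sq_nonneg]
      · positivity
  calc (√(2 * π * v))⁻¹ * rexp (- (x - μ)^2 / (2 * v)) ≤ (√(2 * π * v))⁻¹ * 1 := by
        apply mul_le_mul_of_nonneg_left h1 (by positivity)
    _ = (√(2 * π * v))⁻¹ := mul_one _

lemma gaussianReal_conv (μ₁ μ₂ : ℝ) (v₁ v₂ : ℝ≥0) :
    Measure.map (fun p : ℝ × ℝ => p.1 + p.2) ((gaussianReal μ₁ v₁).prod (gaussianReal μ₂ v₂))
      = gaussianReal (μ₁ + μ₂) (v₁ + v₂) := by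
  by_cases h₁ : v₁ = 0
  · subst h₁
    rw [gaussianReal_zero_var, Measure.dirac_prod,
      Measure.map_map measurable_add measurable_prodMk_left]
    have : ((fun p : ℝ × ℝ => p.1 + p.2) ∘ Prod.mk μ₁) = (μ₁ + ·) := rfl
    rw [this, gaussianReal_map_const_add, add_comm μ₂ μ₁, zero_add]
  by_cases h₂ : v₂ = 0
  · subst h₂
    rw [gaussianReal_zero_var, Measure.prod_dirac,
      Measure.map_map measurable_add (measurable_prodMk_right)]
    have : ((fun p : ℝ × ℝ => p.1 + p.2) ∘ (fun x : ℝ => (x, μ₂))) = (· + μ₂) := rfl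
    rw [this, gaussianReal_map_add_const, add_zero]
  -- main case
  have h₁₂ : v₁ + v₂ ≠ 0 := by simp [h₁]
  have mpdf₁ := measurable_gaussianPDF μ₁ v₁
  have mpdf₂ := measurable_gaussianPDF μ₂ v₂
  ext s hs
  rw [Measure.map_apply measurable_add hs,
    Measure.prod_apply (measurable_add hs),
    gaussianReal_of_var_ne_zero _ h₁, gaussianReal_of_var_ne_zero _ h₂,
    gaussianReal_of_var_ne_zero _ h₁₂, withDensity_apply _ hs]
  have step1 : ∀ x : ℝ,
      (volume.withDensity (gaussianPDF μ₂ v₂)) (Prod.mk x ⁻¹' ((fun p : ℝ × ℝ => p.1 + p.2) ⁻¹' s))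
        = ∫⁻ z in s, gaussianPDF μ₂ v₂ (z - x) := by
    intro x
    have hpre : Prod.mk x ⁻¹' ((fun p : ℝ × ℝ => p.1 + p.2) ⁻¹' s) = (fun y => x + y) ⁻¹' s := rfl
    rw [hpre, withDensity_apply _ ((measurable_const_add x) hs),
      ← lintegral_indicator ((measurable_const_add x) hs) _]
    have hind : ∀ y : ℝ, ((fun y => x + y) ⁻¹' s).indicator (gaussianPDF μ₂ v₂) y
        = s.indicator (fun z => gaussianPDF μ₂ v₂ (z - x)) (x + y) := by
      intro y
      by_cases hy : x + y ∈ s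
      · rw [Set.indicator_of_mem (by exact hy) _, Set.indicator_of_mem (by exact hy)]
        simp
      · rw [Set.indicator_of_notMem (by exact hy) _, Set.indicator_of_notMem (by exact hy)]
    simp_rw [hind]
    have hm1 : Measurable (fun z : ℝ => gaussianPDF μ₂ v₂ (z - x)) :=
      mpdf₂.comp (measurable_id.sub_const x)
    exact ((measurePreserving_add_left volume x).lintegral_comp
      (hm1.indicator hs)).trans (lintegral_indicator hs _)
  simp_rw [step1]
  have hunc : Measurable (Function.uncurry
      (fun x z : ℝ => gaussianPDF μ₁ v₁ x * gaussianPDF μ₂ v₂ (z - x))) :=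
    (mpdf₁.comp measurable_fst).mul (mpdf₂.comp (measurable_snd.sub measurable_fst))
  have hG : Measurable (fun x : ℝ => ∫⁻ z in s, gaussianPDF μ₂ v₂ (z - x)) := by
    have h2 : Measurable (Function.uncurry (fun x z : ℝ => gaussianPDF μ₂ v₂ (z - x))) :=
      mpdf₂.comp (measurable_snd.sub measurable_fst)
    exact h2.lintegral_prod_right
  rw [lintegral_withDensity_eq_lintegral_mul _ mpdf₁ hG]
  have hmul : ∀ x : ℝ, (gaussianPDF μ₁ v₁ * fun x => ∫⁻ z in s, gaussianPDF μ₂ v₂ (z - x)) x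
      = ∫⁻ z in s, gaussianPDF μ₁ v₁ x * gaussianPDF μ₂ v₂ (z - x) := by
    intro x
    simp only [Pi.mul_apply]
    have hm1 : Measurable (fun z : ℝ => gaussianPDF μ₂ v₂ (z - x)) :=
      mpdf₂.comp (measurable_id.sub_const x)
    rw [← lintegral_const_mul _ hm1]
  simp_rw [hmul]
  rw [lintegral_lintegral_swap hunc.aemeasurable]
  refine lintegral_congr fun z => ?_
  -- inner integral identity
  have hb : ∀ x : ℝ, ‖gaussianPDFReal μ₂ v₂ (z - x)‖ ≤ (√(2 * π * v₂))⁻¹ := by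
    intro x
    rw [Real.norm_of_nonneg (gaussianPDFReal_nonneg _ _ _)]
    exact gaussianPDFReal_le _ _ _
  have hint : Integrable (fun x => gaussianPDFReal μ₂ v₂ (z - x) * gaussianPDFReal μ₁ v₁ x) :=
    (integrable_gaussianPDFReal μ₁ v₁).bdd_mul
      (((measurable_gaussianPDFReal μ₂ v₂).comp (measurable_const.sub measurable_id)).aestronglyMeasurable)
      (ae_of_all _ hb)
  have hint' : Integrable (fun x => gaussianPDFReal μ₁ v₁ x * gaussianPDFReal μ₂ v₂ (z - x)) := by
    simpa [mul_comm] using hint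
  calc ∫⁻ x, gaussianPDF μ₁ v₁ x * gaussianPDF μ₂ v₂ (z - x)
      = ∫⁻ x, ENNReal.ofReal (gaussianPDFReal μ₁ v₁ x * gaussianPDFReal μ₂ v₂ (z - x)) := by
        refine lintegral_congr fun x => ?_
        rw [gaussianPDF, gaussianPDF, ← ENNReal.ofReal_mul (gaussianPDFReal_nonneg _ _ _)]
    _ = ENNReal.ofReal (∫ x, gaussianPDFReal μ₁ v₁ x * gaussianPDFReal μ₂ v₂ (z - x)) := by
        rw [← ofReal_integral_eq_lintegral_ofReal hint'
          (ae_of_all _ fun x => mul_nonneg (gaussianPDFReal_nonneg _ _ _) (gaussianPDFReal_nonneg _ _ _))]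
    _ = gaussianPDF (μ₁ + μ₂) (v₁ + v₂) z := by
        rw [gaussianPDFReal_conv μ₁ μ₂ h₁ h₂ z, gaussianPDF]

lemma indepFun_map_add_gaussian {Ω : Type*} [MeasurableSpace Ω] (P : Measure Ω)
    [IsProbabilityMeasure P] {X Y : Ω → ℝ} (hX : Measurable X) (hY : Measurable Y)
    (hXY : IndepFun X Y P) {μ₁ μ₂ : ℝ} {v₁ v₂ : ℝ≥0}
    (hlX : P.map X = gaussianReal μ₁ v₁) (hlY : P.map Y = gaussianReal μ₂ v₂) :
    P.map (fun ω => X ω + Y ω) = gaussianReal (μ₁ + μ₂) (v₁ + v₂) := by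
  have hprod := (ProbabilityTheory.indepFun_iff_map_prod_eq_prod_map_map
    hX.aemeasurable hY.aemeasurable).mp hXY
  have hcomp : (fun ω => X ω + Y ω)
      = (fun p : ℝ × ℝ => p.1 + p.2) ∘ (fun ω => (X ω, Y ω)) := rfl
  rw [hcomp, ← Measure.map_map measurable_add (hX.prodMk hY), hprod, hlX, hlY,
    gaussianReal_conv]

lemma iIndepFun_map_sum_gaussian {Ω ι : Type*} [MeasurableSpace Ω] (P : Measure Ω)
    [IsProbabilityMeasure P] (X : ι → Ω → ℝ) (hmeasX : ∀ i, Measurable (X i))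
    (hindep : iIndepFun X P) (μ : ι → ℝ) (v : ι → ℝ≥0)
    (hlaw : ∀ i, P.map (X i) = gaussianReal (μ i) (v i)) (s : Finset ι) :
    P.map (fun ω => ∑ i ∈ s, X i ω) = gaussianReal (∑ i ∈ s, μ i) (∑ i ∈ s, v i) := by
  classical
  induction s using Finset.cons_induction with
  | empty =>
    rw [show (fun ω : Ω => ∑ i ∈ (∅ : Finset ι), X i ω) = fun _ => (0:ℝ) by simp,
      Measure.map_const, measure_univ, one_smul, Finset.sum_empty, Finset.sum_empty,
      gaussianReal_zero_var]
  | cons a s ha ih =>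
    have hs : Measurable (fun ω => ∑ j ∈ s, X j ω) :=
      Finset.measurable_sum s (fun i _ => hmeasX i)
    have hsum : IndepFun (∑ j ∈ s, X j) (X a) P :=
      hindep.indepFun_finsetSum_of_notMem hmeasX ha
    have hsum' : IndepFun (fun ω => ∑ j ∈ s, X j ω) (X a) P := by
      have he : (∑ j ∈ s, X j) = fun ω => ∑ j ∈ s, X j ω := by
        funext ω; simp [Finset.sum_apply]
      rwa [he] at hsum
    simp_rw [Finset.sum_cons]
    exact indepFun_map_add_gaussian P (hmeasX a) hs hsum'.symm (hlaw a) ih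

theorem stmt4 {Ω : Type*} [MeasurableSpace Ω] (P : Measure Ω) [IsProbabilityMeasure P]
    (n : ℕ) (hn : 3 ≤ n) (m : Fin n → ℝ)
    (mbar w : ℝ) (hmbar : mbar = (1 / (n : ℝ)) * ∑ i, m i)
    (hw : w = (1 / (n : ℝ)) * ∑ i, (m i) ^ 2 - mbar ^ 2) (hwpos : 0 < w)
    (β₀ β₁ σ2 : ℝ) (hσ2 : 0 < σ2)
    (ε : Fin n → Ω → ℝ) (hmeas : ∀ i, Measurable (ε i))
    (hindep : iIndepFun ε P)
    (hlaw : ∀ i, Measure.map (ε i) P = gaussianReal 0 σ2.toNNReal)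
    (Y : Fin n → Ω → ℝ) (hY : ∀ i ω, Y i ω = β₀ + β₁ * m i + ε i ω) :
    Measure.map
        (fun ω =>
          ((1 / (n : ℝ)) * ∑ i, Y i ω)
            - (w⁻¹ * ((1 / (n : ℝ)) * ∑ i, Y i ω * m i
                - ((1 / (n : ℝ)) * ∑ i, Y i ω) * mbar)) * mbar) P
      = gaussianReal β₀ ((σ2 / (n : ℝ)) * (1 + mbar ^ 2 / w)).toNNReal := by
  have hnpos : (0:ℝ) < n := by
    have : (3:ℝ) ≤ n := by exact_mod_cast hn
    linarith
  have hn0 : (n:ℝ) ≠ 0 := ne_of_gt hnpos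
  have hw0 : w ≠ 0 := ne_of_gt hwpos
  have h1 : ∑ i, m i = n * mbar := by
    rw [hmbar]; field_simp
  have h2 : ∑ i, (m i)^2 = n * (w + mbar^2) := by
    rw [hw]; field_simp; ring
  set c : Fin n → ℝ := fun i => (1/(n:ℝ)) * (1 - mbar * (m i - mbar) / w) with hc
  have hfun : (fun ω : Ω => ((1 / (n : ℝ)) * ∑ i, Y i ω)
            - (w⁻¹ * ((1 / (n : ℝ)) * ∑ i, Y i ω * m i
                - ((1 / (n : ℝ)) * ∑ i, Y i ω) * mbar)) * mbar)
      = fun ω => β₀ + ∑ i, c i * ε i ω := by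
    funext ω
    have hsum1 : ∑ i, Y i ω = n * β₀ + β₁ * (n * mbar) + ∑ i, ε i ω := by
      simp only [hY]
      rw [Finset.sum_add_distrib, Finset.sum_add_distrib, Finset.sum_const,
        Finset.card_univ, Fintype.card_fin, ← Finset.mul_sum, h1, nsmul_eq_mul]
    have hsum2 : ∑ i, Y i ω * m i
        = n * β₀ * mbar + β₁ * (n * (w + mbar^2)) + ∑ i, ε i ω * m i := by
      have he : ∀ i, Y i ω * m i = β₀ * m i + β₁ * (m i)^2 + ε i ω * m i := by
        intro i; rw [hY]; ring
      rw [Finset.sum_congr rfl (fun i _ => he i), Finset.sum_add_distrib,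
        Finset.sum_add_distrib, ← Finset.mul_sum, ← Finset.mul_sum, h1, h2]
      ring
    have hsumc : ∑ i, c i * ε i ω
        = ((1/(n:ℝ)) * (1 + mbar^2/w)) * ∑ i, ε i ω
          - (mbar/((n:ℝ)*w)) * ∑ i, ε i ω * m i := by
      have he : ∀ i, c i * ε i ω
          = ((1/(n:ℝ)) * (1 + mbar^2/w)) * ε i ω - (mbar/((n:ℝ)*w)) * (ε i ω * m i) := by
        intro i; rw [hc]; field_simp; ring
      rw [Finset.sum_congr rfl (fun i _ => he i), Finset.sum_sub_distrib,
        ← Finset.mul_sum, ← Finset.mul_sum]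
    rw [hsum1, hsum2, hsumc]
    field_simp
    ring
  rw [hfun]
  have hZmeas : ∀ i, Measurable (fun ω => c i * ε i ω) := fun i => (hmeas i).const_mul _
  have hZindep : iIndepFun (fun i => fun ω => c i * ε i ω) P :=
    hindep.comp (fun i x => c i * x) (fun i => measurable_id.const_mul _)
  have hZlaw : ∀ i, P.map (fun ω => c i * ε i ω)
      = gaussianReal 0 (NNReal.mk ((c i)^2) (sq_nonneg _) * σ2.toNNReal) := by
    intro i
    have hcomp : (fun ω => c i * ε i ω) = (fun x => c i * x) ∘ ε i := rfl
    rw [hcomp, ← Measure.map_map (show Measurable fun x : ℝ => c i * x from measurable_id.const_mul _) (hmeas i), hlaw i,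
      gaussianReal_map_const_mul, mul_zero]
  have hsummeas : Measurable (fun ω => ∑ i, c i * ε i ω) :=
    Finset.measurable_sum _ (fun i _ => hZmeas i)
  have hsumlaw := iIndepFun_map_sum_gaussian P _ hZmeas hZindep (fun _ => 0)
    (fun i => NNReal.mk ((c i)^2) (sq_nonneg _) * σ2.toNNReal) hZlaw Finset.univ
  have hcomp2 : (fun ω => β₀ + ∑ i, c i * ε i ω)
      = (fun x => β₀ + x) ∘ (fun ω => ∑ i, c i * ε i ω) := rfl
  rw [hcomp2, ← Measure.map_map (measurable_const_add β₀) hsummeas, hsumlaw,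
    gaussianReal_map_const_add]
  congr 1
  · simp
  · -- variance computation
    have hci : ∀ i : Fin n, (c i)^2
        = (w+mbar^2)^2/((n:ℝ)^2*w^2) + (-(2*(w+mbar^2)*mbar)/((n:ℝ)^2*w^2)) * m i
          + (mbar^2/((n:ℝ)^2*w^2)) * (m i)^2 := by
      intro i; rw [hc]; field_simp; ring
    have hsumsq : ∑ i, (c i)^2 = (1/(n:ℝ)) * (1 + mbar^2/w) := by
      rw [Finset.sum_congr rfl (fun i _ => hci i), Finset.sum_add_distrib,
        Finset.sum_add_distrib, Finset.sum_const, Finset.card_univ, Fintype.card_fin,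
        ← Finset.mul_sum, ← Finset.mul_sum, h1, h2, nsmul_eq_mul]
      field_simp
      ring
    apply NNReal.coe_injective
    rw [NNReal.coe_sum]
    have hrhs : ((((σ2 / (n : ℝ)) * (1 + mbar ^ 2 / w)).toNNReal : ℝ≥0) : ℝ)
        = (σ2 / (n : ℝ)) * (1 + mbar ^ 2 / w) := by
      rw [Real.coe_toNNReal]
      positivity
    rw [hrhs]
    have hterm : ∀ i : Fin n, (((NNReal.mk ((c i)^2) (sq_nonneg _) * σ2.toNNReal : ℝ≥0)) : ℝ)
        = (c i)^2 * σ2 := by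
      intro i
      rw [NNReal.coe_mul, Real.coe_toNNReal _ hσ2.le, NNReal.coe_mk]
    rw [Finset.sum_congr rfl (fun i _ => hterm i), ← Finset.sum_mul, hsumsq]
    field_simp
end

section
/- In the exponential regression setup, the maximum likelihood slope estimator β̂_{2,ML} := min_{1≤i≤n} (Y_i/s_i) satisfies, for every t ≥ β₂, ℙ(min_{1≤i≤n} (Y_i/s_i) > t) = exp(−(t − β₂)·(Σ_{i=1}^n s_i)/β); equivalently, β̂_{2,ML} − β₂ has the scale-parametrized exponential distribution Exp(β/(n s̄)). -/
open MeasureTheory ProbabilityTheory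

/-- The scale-parametrized exponential distribution `Exp(lam)`,
with density `lam⁻¹ * exp (-x / lam)` on `(0, ∞)`. -/
noncomputable def expScale (lam : ℝ) : Measure ℝ :=
  volume.withDensity fun x => ENNReal.ofReal (if 0 < x then lam⁻¹ * Real.exp (-x / lam) else 0)

/-- The shape-scale parametrized Gamma distribution `Gamma(k, θ)`,
with density `x^(k-1) * exp (-x/θ) / (Γ(k) * θ^k)` on `(0, ∞)`. -/
noncomputable def gammaScale (k θ : ℝ) : Measure ℝ :=
  volume.withDensity fun x =>
    ENNReal.ofReal
      (if 0 < x then x ^ (k - 1) * Real.exp (-x / θ) / (Real.Gamma k * θ ^ k) else 0)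


lemma expScale_eq_expMeasure {lam : ℝ} (hlam : 0 < lam) :
    expScale lam = expMeasure lam⁻¹ := by
  have h : expMeasure lam⁻¹ = volume.withDensity (exponentialPDF lam⁻¹) := rfl
  rw [expScale, h]
  refine withDensity_congr_ae ?_
  filter_upwards [compl_mem_ae_iff.mpr (Real.volume_singleton (a := (0:ℝ)))] with x hx
  have hx0 : x ≠ 0 := hx
  rw [exponentialPDF_eq]
  congr 1
  rcases lt_or_gt_of_ne hx0 with h | h
  · rw [if_neg (not_lt.mpr h.le), if_neg (not_le.mpr h)]
  · rw [if_pos h, if_pos h.le]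
    rw [div_eq_mul_inv]; ring_nf

lemma expScale_isProb {lam : ℝ} (hlam : 0 < lam) : IsProbabilityMeasure (expScale lam) := by
  rw [expScale_eq_expMeasure hlam]
  exact isProbabilityMeasure_expMeasure (by positivity)

lemma expScale_Iic {lam : ℝ} (hlam : 0 < lam) (t : ℝ) :
    expScale lam (Set.Iic t)
      = ENNReal.ofReal (if 0 ≤ t then 1 - Real.exp (-(t / lam)) else 0) := by
  rw [expScale_eq_expMeasure hlam]
  have h : expMeasure lam⁻¹ (Set.Iic t) = ∫⁻ y in Set.Iic t, exponentialPDF lam⁻¹ y := by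
    rw [expMeasure, gammaMeasure, withDensity_apply _ measurableSet_Iic]
    rfl
  rw [h, lintegral_exponentialPDF_eq_antiDeriv (by positivity) t]
  congr 2
  rw [div_eq_mul_inv, mul_comm]

lemma expScale_Ioi {lam : ℝ} (hlam : 0 < lam) {t : ℝ} (ht : 0 ≤ t) :
    expScale lam (Set.Ioi t) = ENNReal.ofReal (Real.exp (-(t / lam))) := by
  have := expScale_isProb hlam
  have hc : Set.Ioi t = (Set.Iic t)ᶜ := (Set.compl_Iic).symm
  rw [hc, measure_compl measurableSet_Iic (measure_ne_top _ _), measure_univ,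
    expScale_Iic hlam t, if_pos ht]
  rw [← ENNReal.ofReal_one, ← ENNReal.ofReal_sub _ (sub_nonneg.mpr (Real.exp_le_one_iff.mpr (neg_nonpos.mpr (by positivity))))]
  congr 1
  ring

theorem stmt6 {Ω : Type*} [MeasurableSpace Ω] (P : Measure Ω) [IsProbabilityMeasure P]
    (n : ℕ) (hn : 2 ≤ n) (s : Fin n → ℝ) (hs : ∀ i, 0 < s i)
    (sbar : ℝ) (hsbar : sbar = (1 / (n : ℝ)) * ∑ i, s i)
    (β₂ β : ℝ) (hβ : 0 < β)
    (η : Fin n → Ω → ℝ) (hmeas : ∀ i, Measurable (η i))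
    (hindep : iIndepFun η P)
    (hlaw : ∀ i, Measure.map (η i) P = expScale β)
    (Y : Fin n → Ω → ℝ) (hY : ∀ i ω, Y i ω = β₂ * s i + η i ω) :
    (∀ t, β₂ ≤ t →
      P {ω | t < ⨅ i, Y i ω / s i}
        = ENNReal.ofReal (Real.exp (-((t - β₂) * (∑ i, s i) / β)))) ∧
    Measure.map (fun ω => (⨅ i, Y i ω / s i) - β₂) P
      = expScale (β / ((n : ℝ) * sbar)) := by
  have hne : Nonempty (Fin n) := ⟨⟨0, by omega⟩⟩
  have hS : 0 < ∑ i, s i :=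
    Finset.sum_pos (fun i _ => hs i) ⟨Classical.arbitrary _, Finset.mem_univ _⟩
  have key : ∀ u : ℝ, 0 ≤ u →
      P {ω | ∀ i, u * s i < η i ω} = ENNReal.ofReal (Real.exp (-(u * (∑ i, s i) / β))) := by
    intro u hu
    have hset : {ω | ∀ i, u * s i < η i ω} = ⋂ i, η i ⁻¹' Set.Ioi (u * s i) := by
      ext ω; simp [Set.mem_iInter]
    rw [hset, hindep.meas_iInter (fun i => ⟨Set.Ioi (u * s i), measurableSet_Ioi, rfl⟩)]
    have hterm : ∀ i, P (η i ⁻¹' Set.Ioi (u * s i))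
        = ENNReal.ofReal (Real.exp (-(u * s i / β))) := by
      intro i
      rw [← Measure.map_apply (hmeas i) measurableSet_Ioi, hlaw i,
        expScale_Ioi hβ (by have := (hs i).le; positivity)]
    simp_rw [hterm]
    rw [← ENNReal.ofReal_prod_of_nonneg (fun i _ => (Real.exp_pos _).le), ← Real.exp_sum]
    congr 2
    rw [Finset.mul_sum, Finset.sum_div, ← Finset.sum_neg_distrib]
  have hiff : ∀ (t : ℝ) (ω : Ω),
      (t < ⨅ i, Y i ω / s i) ↔ ∀ i, (t - β₂) * s i < η i ω := by
    intro t ω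
    have hbdd : BddBelow (Set.range fun i => Y i ω / s i) := (Set.finite_range _).bddBelow
    constructor
    · intro h i
      have h2 : t < Y i ω / s i := lt_of_lt_of_le h (ciInf_le hbdd i)
      rw [hY i ω, lt_div_iff₀ (hs i)] at h2
      nlinarith
    · intro h
      obtain ⟨i0, hi0⟩ := exists_eq_ciInf_of_finite (f := fun i => Y i ω / s i)
      rw [← hi0]
      show t < Y i0 ω / s i0
      rw [hY i0 ω, lt_div_iff₀ (hs i0)]
      have := h i0
      nlinarith
  have part1 : ∀ t, β₂ ≤ t →
      P {ω | t < ⨅ i, Y i ω / s i}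
        = ENNReal.ofReal (Real.exp (-((t - β₂) * (∑ i, s i) / β))) := by
    intro t ht
    have hsets : {ω | t < ⨅ i, Y i ω / s i} = {ω | ∀ i, (t - β₂) * s i < η i ω} :=
      Set.ext fun ω => hiff t ω
    rw [hsets, key (t - β₂) (sub_nonneg.mpr ht)]
  refine ⟨part1, ?_⟩
  have hn0 : (0:ℝ) < (n : ℝ) := by
    have : (2:ℝ) ≤ (n:ℝ) := by exact_mod_cast hn
    linarith
  have hns : (n:ℝ) * sbar = ∑ i, s i := by
    rw [hsbar]; field_simp
  have hlam : 0 < β / ((n:ℝ) * sbar) := by rw [hns]; positivity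
  have hYmeas : ∀ i, Measurable fun ω => Y i ω / s i := by
    intro i
    have h : (fun ω => Y i ω / s i) = fun ω => (β₂ * s i + η i ω) / s i := by
      funext ω; rw [hY]
    rw [h]
    exact (measurable_const.add (hmeas i)).div_const _
  have hInf : Measurable fun ω => ⨅ i, Y i ω / s i := Measurable.iInf hYmeas
  have hZ : Measurable fun ω => (⨅ i, Y i ω / s i) - β₂ := hInf.sub measurable_const
  have := expScale_isProb hlam
  have : IsProbabilityMeasure (Measure.map (fun ω => (⨅ i, Y i ω / s i) - β₂) P) :=
    Measure.isProbabilityMeasure_map hZ.aemeasurable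
  refine MeasureTheory.Measure.ext_of_Iic _ _ (fun t => ?_)
  rw [Measure.map_apply hZ measurableSet_Iic]
  have hpre : (fun ω => (⨅ i, Y i ω / s i) - β₂) ⁻¹' Set.Iic t
      = {ω | (t + β₂) < ⨅ i, Y i ω / s i}ᶜ := by
    ext ω
    simp only [Set.mem_preimage, Set.mem_Iic, Set.mem_compl_iff, Set.mem_setOf_eq, not_lt,
      sub_le_iff_le_add]
  have hmeasEvent : MeasurableSet {ω | (t + β₂) < ⨅ i, Y i ω / s i} :=
    measurableSet_lt measurable_const hInf
  rw [hpre, measure_compl hmeasEvent (measure_ne_top _ _), measure_univ,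
    expScale_Iic hlam]
  rcases le_or_gt 0 t with h0 | h0
  · rw [if_pos h0, part1 (t + β₂) (by linarith)]
    have harg : (t + β₂ - β₂) * (∑ i, s i) / β = t / (β / ((n:ℝ) * sbar)) := by
      rw [hns]; field_simp; try ring
    rw [harg, ← ENNReal.ofReal_one,
      ← ENNReal.ofReal_sub _ (Real.exp_nonneg _)]
  · rw [if_neg (not_le.mpr h0), ENNReal.ofReal_zero]
    have h1 : P {ω | (t + β₂) < ⨅ i, Y i ω / s i} = 1 := by
      have hsub : {ω | β₂ < ⨅ i, Y i ω / s i} ⊆ {ω | (t + β₂) < ⨅ i, Y i ω / s i} :=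
        fun ω hω => by
          simp only [Set.mem_setOf_eq] at hω ⊢; linarith
      have hb : P {ω | β₂ < ⨅ i, Y i ω / s i} = 1 := by
        rw [part1 β₂ le_rfl]
        simp
      refine le_antisymm prob_le_one ?_
      rw [← hb]
      exact measure_mono hsub
    rw [h1, tsub_self]
end

section
/- In the exponential regression setup, the bias-corrected estimator β̂ := (n/(n−1))·(Ȳ − min_{1≤j≤n}(Y_j/s_j)·s̄), where Ȳ = (1/n)Σ_{i=1}^n Y_i, is an unbiased estimator of β; that is, 𝔼[β̂] = β. -/
open MeasureTheory ProbabilityTheory Real Set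
open scoped ENNReal NNReal

namespace ExpScaleAux

variable {lam : ℝ}

lemma ae_ne_zero : ∀ᵐ x : ℝ, x ≠ 0 := by
  rw [ae_iff]
  simp only [ne_eq, not_not, setOf_eq_eq_singleton]
  exact measure_singleton 0

lemma expScale_eq (lam : ℝ) : expScale lam = expMeasure lam⁻¹ := by
  show _ = volume.withDensity (exponentialPDF lam⁻¹)
  refine withDensity_congr_ae ?_
  filter_upwards [ae_ne_zero] with x hx
  rw [exponentialPDF_eq]
  rcases lt_trichotomy x 0 with h | h | h
  · rw [if_neg (not_lt.2 h.le), if_neg (not_le.2 h)]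
  · exact absurd h hx
  · rw [if_pos h, if_pos h.le, neg_div, div_eq_inv_mul]

lemma isProb (hlam : 0 < lam) : IsProbabilityMeasure (expScale lam) := by
  rw [expScale_eq]
  exact isProbabilityMeasure_expMeasure (inv_pos.2 hlam)

lemma expScale_Iic (hlam : 0 < lam) (a : ℝ) :
    expScale lam (Iic a) = ENNReal.ofReal (if 0 ≤ a then 1 - Real.exp (-a / lam) else 0) := by
  rw [expScale_eq, expMeasure, gammaMeasure, withDensity_apply _ measurableSet_Iic]
  have h : ∫⁻ y in Iic a, gammaPDF 1 lam⁻¹ y = ∫⁻ y in Iic a, exponentialPDF lam⁻¹ y := rfl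
  rw [h, lintegral_exponentialPDF_eq_antiDeriv (inv_pos.2 hlam), neg_div, div_eq_inv_mul]

lemma expScale_Ioi (hlam : 0 < lam) (a : ℝ) :
    expScale lam (Ioi a) = if 0 ≤ a then ENNReal.ofReal (Real.exp (-a / lam)) else 1 := by
  haveI := isProb hlam
  rw [← compl_Iic, measure_compl measurableSet_Iic (measure_ne_top _ _), measure_univ,
    expScale_Iic hlam]
  split_ifs with ha
  · rw [ENNReal.ofReal_sub _ (exp_pos _).le, ENNReal.ofReal_one,
      ENNReal.sub_sub_cancel ENNReal.one_ne_top]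
    refine ENNReal.ofReal_le_one.2 (exp_le_one_iff.2 ?_)
    rw [neg_div]
    exact neg_nonpos.2 (div_nonneg ha hlam.le)
  · simp

lemma density_eq (lam : ℝ) : expScale lam = volume.withDensity
    (fun x => ((Real.toNNReal (if 0 < x then lam⁻¹ * Real.exp (-x / lam) else 0) : ℝ≥0) : ℝ≥0∞)) :=
  rfl

lemma meas_g0 (lam : ℝ) :
    Measurable fun x : ℝ => Real.toNNReal (if 0 < x then lam⁻¹ * Real.exp (-x / lam) else 0) := by
  apply Measurable.real_toNNReal
  exact Measurable.ite measurableSet_Ioi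
    (((measurable_id.neg).div_const lam).exp.const_mul lam⁻¹) measurable_const

lemma smul_eq_indicator (hlam : 0 < lam) (x : ℝ) :
    (Real.toNNReal (if 0 < x then lam⁻¹ * Real.exp (-x / lam) else 0) : ℝ≥0) • x
      = (Ioi (0:ℝ)).indicator (fun y => lam⁻¹ * Real.exp (-y / lam) * y) x := by
  by_cases h : 0 < x
  · rw [if_pos h, Set.indicator_of_mem (mem_Ioi.2 h), NNReal.smul_def, smul_eq_mul,
      Real.coe_toNNReal _ (by positivity)]
  · rw [if_neg h, Set.indicator_of_notMem (by simpa using h)]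
    simp

lemma integrableOn_aux (hlam : 0 < lam) :
    IntegrableOn (fun y : ℝ => lam⁻¹ * Real.exp (-y / lam) * y) (Ioi 0) := by
  have h := integrableOn_rpow_mul_exp_neg_mul_rpow (p := 1) (s := 1) (b := lam⁻¹)
    (by norm_num) zero_lt_one (inv_pos.2 hlam)
  refine IntegrableOn.congr_fun (h.const_mul lam⁻¹) (fun x hx => ?_) measurableSet_Ioi
  simp only [rpow_one]
  rw [show -lam⁻¹ * x = -x / lam by ring]
  ring

lemma integrable_id_expScale (hlam : 0 < lam) : Integrable (fun x : ℝ => x) (expScale lam) := by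
  rw [density_eq]
  refine (integrable_withDensity_iff_integrable_smul (E := ℝ) (meas_g0 lam)
    (g := fun x : ℝ => x)).2 ?_
  have h : (fun x : ℝ =>
      (Real.toNNReal (if 0 < x then lam⁻¹ * Real.exp (-x / lam) else 0) : ℝ≥0) • x)
      = (Ioi (0:ℝ)).indicator (fun y => lam⁻¹ * Real.exp (-y / lam) * y) :=
    funext fun x => smul_eq_indicator hlam x
  rw [h, integrable_indicator_iff measurableSet_Ioi]
  exact integrableOn_aux hlam

lemma integral_id_expScale (hlam : 0 < lam) : ∫ x, x ∂(expScale lam) = lam := by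
  have key := integral_withDensity_eq_integral_smul (μ := volume) (meas_g0 lam) (fun x : ℝ => x)
  rw [density_eq, key]
  have h : (fun x : ℝ =>
      (Real.toNNReal (if 0 < x then lam⁻¹ * Real.exp (-x / lam) else 0) : ℝ≥0) • x)
      = (Ioi (0:ℝ)).indicator (fun y => lam⁻¹ * Real.exp (-y / lam) * y) :=
    funext fun x => smul_eq_indicator hlam x
  rw [h, integral_indicator measurableSet_Ioi]
  have h2 := integral_rpow_mul_exp_neg_mul_Ioi (a := 2) (r := lam⁻¹)
    (by norm_num) (inv_pos.2 hlam)
  have heq : ∀ x ∈ Ioi (0:ℝ), lam⁻¹ * Real.exp (-x / lam) * x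
      = lam⁻¹ * (x ^ ((2:ℝ)-1) * Real.exp (-(lam⁻¹ * x))) := by
    intro x _
    rw [show ((2:ℝ)-1) = 1 by norm_num, rpow_one, show -(lam⁻¹ * x) = -x / lam by ring]
    ring
  rw [setIntegral_congr_fun measurableSet_Ioi heq, integral_const_mul, h2, Real.Gamma_two,
    one_div, inv_inv, mul_one, show (2:ℝ) = ((2:ℕ):ℝ) by norm_num, rpow_natCast]
  field_simp

end ExpScaleAux

lemma measurable_finset_inf' {Ω ι : Type*} [MeasurableSpace Ω] {t : Finset ι}
    (ht : t.Nonempty) (f : ι → Ω → ℝ) (hf : ∀ i, Measurable (f i)) :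
    Measurable fun ω => t.inf' ht fun i => f i ω := by
  induction ht using Finset.Nonempty.cons_induction with
  | singleton i => simpa using hf i
  | cons i t hit ht ih =>
    simp only [Finset.inf'_cons ht]
    exact (hf i).inf ih

lemma finset_inf'_const_add {ι : Type*} {t : Finset ι} (ht : t.Nonempty) (c : ℝ) (f : ι → ℝ) :
    t.inf' ht (fun i => c + f i) = c + t.inf' ht f := by
  induction ht using Finset.Nonempty.cons_induction with
  | singleton i => simp
  | cons i t hit ht ih =>
    rw [Finset.inf'_cons ht, Finset.inf'_cons ht, ih, min_add_add_left]

theorem stmt9 {Ω : Type*} [MeasurableSpace Ω] (P : Measure Ω) [IsProbabilityMeasure P]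
    (n : ℕ) (hn : 2 ≤ n) (s : Fin n → ℝ) (hs : ∀ i, 0 < s i)
    (sbar : ℝ) (hsbar : sbar = (1 / (n : ℝ)) * ∑ i, s i)
    (β₂ β : ℝ) (hβ : 0 < β)
    (η : Fin n → Ω → ℝ) (hmeas : ∀ i, Measurable (η i))
    (hindep : iIndepFun η P)
    (hlaw : ∀ i, Measure.map (η i) P = expScale β)
    (Y : Fin n → Ω → ℝ) (hY : ∀ i ω, Y i ω = β₂ * s i + η i ω) :
    (∫ ω, ((n : ℝ) / ((n : ℝ) - 1))
        * ((1 / (n : ℝ)) * ∑ i, Y i ω - (⨅ j, Y j ω / s j) * sbar) ∂P) = β := by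
  classical
  haveI : Nonempty (Fin n) := ⟨⟨0, by omega⟩⟩
  have hnpos : (0:ℝ) < n := by exact_mod_cast Nat.lt_of_lt_of_le Nat.zero_lt_two hn
  have hn2 : (2:ℝ) ≤ n := by exact_mod_cast hn
  have hn1 : (n:ℝ) - 1 ≠ 0 := by linarith
  set S : ℝ := ∑ i, s i with hS
  have hSpos : 0 < S := Finset.sum_pos (fun i _ => hs i) Finset.univ_nonempty
  have hsbar' : sbar = S / n := by rw [hsbar]; ring
  set M : Ω → ℝ := fun ω => ⨅ j, η j ω / s j with hMdef
  have hMeq : ∀ ω, M ω = Finset.univ.inf' Finset.univ_nonempty (fun j => η j ω / s j) :=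
    fun ω => (Finset.inf'_univ_eq_ciInf _).symm
  have hMmeas : Measurable M := by
    have h := measurable_finset_inf' (t := (Finset.univ : Finset (Fin n)))
      Finset.univ_nonempty (fun j ω => η j ω / s j) (fun j => (hmeas j).div_const _)
    have : M = fun ω => Finset.univ.inf' Finset.univ_nonempty fun j => η j ω / s j :=
      funext hMeq
    rw [this]; exact h
  have hβS : 0 < β / S := div_pos hβ hSpos
  haveI : IsProbabilityMeasure (Measure.map M P) := Measure.isProbabilityMeasure_map hMmeas.aemeasurable
  have hmapIoi : ∀ a : ℝ, Measure.map M P (Ioi a) = expScale (β / S) (Ioi a) := by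
    intro a
    rw [Measure.map_apply hMmeas measurableSet_Ioi, ExpScaleAux.expScale_Ioi hβS]
    rcases le_or_gt 0 a with ha | ha
    · rw [if_pos ha]
      have hset : M ⁻¹' Ioi a = ⋂ j, η j ⁻¹' Ioi (a * s j) := by
        ext ω
        simp only [mem_preimage, mem_Ioi, mem_iInter, hMeq, Finset.lt_inf'_iff,
          Finset.mem_univ, true_implies]
        exact forall_congr' fun j => lt_div_iff₀ (hs j)
      rw [hset, hindep.meas_iInter (fun j => ⟨Ioi (a * s j), measurableSet_Ioi, rfl⟩)]
      have hterm : ∀ j, P (η j ⁻¹' Ioi (a * s j))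
          = ENNReal.ofReal (Real.exp (-(a * s j) / β)) := by
        intro j
        rw [← Measure.map_apply (hmeas j) measurableSet_Ioi, hlaw j,
          ExpScaleAux.expScale_Ioi hβ, if_pos (mul_nonneg ha (hs j).le)]
      simp_rw [hterm]
      rw [← ENNReal.ofReal_prod_of_nonneg (fun i _ => (exp_pos _).le), ← Real.exp_sum]
      congr 2
      rw [← Finset.sum_div, div_div_eq_mul_div, Finset.sum_neg_distrib, ← Finset.mul_sum,
        ← hS, neg_mul]
    · rw [if_neg (not_le.2 ha)]
      have hpos : ∀ j, ∀ᵐ ω ∂P, 0 < η j ω := by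
        intro j
        rw [ae_iff]
        have h : {ω | ¬ 0 < η j ω} = η j ⁻¹' Iic 0 := by ext ω; simp [not_lt]
        rw [h, ← Measure.map_apply (hmeas j) measurableSet_Iic, hlaw j,
          ExpScaleAux.expScale_Iic hβ]
        simp
      have hae : ∀ᵐ ω ∂P, ω ∈ M ⁻¹' Ioi a := by
        filter_upwards [ae_all_iff.2 hpos] with ω hω
        have h : ∀ j, a < η j ω / s j := fun j => lt_trans ha (div_pos (hω j) (hs j))
        simp only [mem_preimage, mem_Ioi, hMeq, Finset.lt_inf'_iff, Finset.mem_univ,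
          true_implies]
        exact h
      rw [← prob_compl_eq_zero_iff (hMmeas measurableSet_Ioi)]
      exact ae_iff.1 hae
  have hmapM : Measure.map M P = expScale (β / S) := by
    haveI := ExpScaleAux.isProb hβS
    refine Measure.ext_of_Iic _ _ (fun a => ?_)
    rw [show (Iic a) = (Ioi a)ᶜ from compl_Ioi.symm,
      measure_compl measurableSet_Ioi (measure_ne_top _ _),
      measure_compl measurableSet_Ioi (measure_ne_top _ _),
      measure_univ, measure_univ, hmapIoi a]
  have hint : ∀ i, Integrable (η i) P := by
    intro i
    have h0 : Integrable (fun x : ℝ => x) (Measure.map (η i) P) := by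
      rw [hlaw i]; exact ExpScaleAux.integrable_id_expScale hβ
    exact h0.comp_measurable (hmeas i)
  have hEη : ∀ i, ∫ ω, η i ω ∂P = β := by
    intro i
    have h1 : ∫ x, x ∂(Measure.map (η i) P) = β := by
      rw [hlaw i]; exact ExpScaleAux.integral_id_expScale hβ
    exact (integral_map (hmeas i).aemeasurable aestronglyMeasurable_id).symm.trans h1
  have hintM : Integrable M P := by
    have h0 : Integrable (fun x : ℝ => x) (Measure.map M P) := by
      rw [hmapM]; exact ExpScaleAux.integrable_id_expScale hβS
    exact h0.comp_measurable hMmeas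
  have hEM : ∫ ω, M ω ∂P = β / S := by
    have h1 : ∫ x, x ∂(Measure.map M P) = β / S := by
      rw [hmapM]; exact ExpScaleAux.integral_id_expScale hβS
    exact (integral_map hMmeas.aemeasurable aestronglyMeasurable_id).symm.trans h1
  have hpoint : ∀ ω, ((n:ℝ)/((n:ℝ)-1)) * ((1/(n:ℝ)) * ∑ i, Y i ω - (⨅ j, Y j ω / s j) * sbar)
      = (((n:ℝ)/((n:ℝ)-1)/(n:ℝ)) * ∑ i, η i ω) - (((n:ℝ)/((n:ℝ)-1)) * sbar) * M ω := by
    intro ω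
    have h1 : (⨅ j, Y j ω / s j) = β₂ + M ω := by
      have e : ∀ j, Y j ω / s j = β₂ + η j ω / s j := by
        intro j; rw [hY, add_div, mul_div_cancel_right₀ _ (hs j).ne']
      calc (⨅ j, Y j ω / s j) = ⨅ j, (β₂ + η j ω / s j) := by simp_rw [e]
        _ = β₂ + M ω := by
          rw [hMeq ω, ← Finset.inf'_univ_eq_ciInf, finset_inf'_const_add]
    have h2 : ∑ i, Y i ω = β₂ * ((n:ℝ) * sbar) + ∑ i, η i ω := by
      simp_rw [hY]
      rw [Finset.sum_add_distrib, ← Finset.mul_sum, ← hS]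
      have : (n:ℝ) * sbar = S := by rw [hsbar']; field_simp
      rw [this]
    rw [h1, h2]
    field_simp
    ring
  rw [show (fun ω => ((n : ℝ) / ((n : ℝ) - 1))
        * ((1 / (n : ℝ)) * ∑ i, Y i ω - (⨅ j, Y j ω / s j) * sbar))
      = fun ω => (((n:ℝ)/((n:ℝ)-1)/(n:ℝ)) * ∑ i, η i ω)
        - (((n:ℝ)/((n:ℝ)-1)) * sbar) * M ω from funext hpoint]
  rw [integral_sub ((integrable_finset_sum _ (fun i _ => hint i)).const_mul _)
      (hintM.const_mul _), integral_const_mul, integral_const_mul,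
      integral_finset_sum _ (fun i _ => hint i), hEM]
  simp_rw [hEη]
  rw [Finset.sum_const, Finset.card_univ, Fintype.card_fin, nsmul_eq_mul, hsbar']
  field_simp
end

section
/- In the Gaussian simple linear regression setup, define β̂₁ = w^{−1}·((1/n)Σ_{j=1}^n Y_j m_j − Ȳ·m̄) and β̂₀ = Ȳ − β̂₁ m̄ with Ȳ = (1/n)Σ_{j=1}^n Y_j. Then for each i ∈ {1,…,n}, the i-th residual mean μ̂_i := Y_i − β̂₀ − β̂₁ m_i has the normal distribution N(0, σ²·(1 − 1/n − (m_i − m̄)²/(n w))); that is, the pushforward of ℙ under μ̂_i is the Gaussian measure on ℝ with mean 0 and variance σ²·(1 − 1/n − (m_i − m̄)²/(n w)). -/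
open MeasureTheory ProbabilityTheory Real
open scoped NNReal ENNReal

lemma my_gauss_exp_mul (a b y t : ℝ) (ha : 0 < a) (hb : 0 < b) :
    rexp (-(t - 0) ^ 2 / (2 * a)) * rexp (-(y - t - 0) ^ 2 / (2 * b))
      = rexp (-(y - 0) ^ 2 / (2 * (a + b))) *
        rexp (-((a + b) / (2 * a * b)) * (t - a * y / (a + b)) ^ 2) := by
  rw [← Real.exp_add, ← Real.exp_add]
  congr 1
  have h1 : a ≠ 0 := ha.ne'
  have h2 : b ≠ 0 := hb.ne'
  have h3 : a + b ≠ 0 := by positivity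
  field_simp
  ring

lemma my_gauss_pdf_key (v1 v2 : ℝ≥0) (h1 : v1 ≠ 0) (h2 : v2 ≠ 0) (y t : ℝ) :
    gaussianPDFReal 0 v1 t * gaussianPDFReal 0 v2 (y - t)
      = ((√(2 * π * v1))⁻¹ * (√(2 * π * v2))⁻¹ * rexp (-(y - 0) ^ 2 / (2 * ((v1:ℝ) + v2)))) *
        rexp (-(((v1:ℝ) + v2) / (2 * v1 * v2)) * (t - v1 * y / ((v1:ℝ) + v2)) ^ 2) := by
  have ha : 0 < (v1:ℝ) := by exact_mod_cast pos_iff_ne_zero.mpr h1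
  have hb : 0 < (v2:ℝ) := by exact_mod_cast pos_iff_ne_zero.mpr h2
  simp only [gaussianPDFReal]
  rw [mul_mul_mul_comm, my_gauss_exp_mul (v1:ℝ) (v2:ℝ) y t ha hb]
  ring

lemma my_gauss_pdf_conv (v1 v2 : ℝ≥0) (h1 : v1 ≠ 0) (h2 : v2 ≠ 0) (y : ℝ) :
    ∫ t : ℝ, gaussianPDFReal 0 v1 t * gaussianPDFReal 0 v2 (y - t)
      = gaussianPDFReal 0 (v1 + v2) y := by
  have ha : 0 < (v1:ℝ) := by exact_mod_cast pos_iff_ne_zero.mpr h1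
  have hb : 0 < (v2:ℝ) := by exact_mod_cast pos_iff_ne_zero.mpr h2
  have hk : 0 < ((v1:ℝ) + v2) / (2 * v1 * v2) := by positivity
  simp_rw [my_gauss_pdf_key v1 v2 h1 h2 y]
  rw [MeasureTheory.integral_const_mul]
  rw [integral_sub_right_eq_self
    (fun u => rexp (-(((v1:ℝ) + v2) / (2 * v1 * v2)) * u ^ 2)) ((v1:ℝ) * y / ((v1:ℝ) + v2))]
  rw [integral_gaussian]
  have hsq : (√(2 * π * v1))⁻¹ * (√(2 * π * v2))⁻¹ * √(π / (((v1:ℝ) + v2) / (2 * v1 * v2)))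
      = (√(2 * π * ((v1:ℝ) + v2)))⁻¹ := by
    rw [← Real.sqrt_inv, ← Real.sqrt_inv, ← Real.sqrt_inv,
      ← Real.sqrt_mul (by positivity), ← Real.sqrt_mul (by positivity)]
    congr 1
    have hπ : (π : ℝ) ≠ 0 := pi_ne_zero
    field_simp
  simp only [gaussianPDFReal]
  push_cast
  rw [mul_comm ((√(2 * π * v1))⁻¹ * (√(2 * π * v2))⁻¹) _, mul_assoc, hsq]
  ring

lemma my_gauss_conv_int (v1 v2 : ℝ≥0) (h1 : v1 ≠ 0) (h2 : v2 ≠ 0) (u : ℝ) :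
    Integrable (fun t => gaussianPDFReal 0 v1 t * gaussianPDFReal 0 v2 (u - t)) := by
  have ha : 0 < (v1:ℝ) := by exact_mod_cast pos_iff_ne_zero.mpr h1
  have hb : 0 < (v2:ℝ) := by exact_mod_cast pos_iff_ne_zero.mpr h2
  have hk : 0 < ((v1:ℝ) + v2) / (2 * v1 * v2) := by positivity
  simp_rw [my_gauss_pdf_key v1 v2 h1 h2 u]
  exact ((integrable_exp_neg_mul_sq hk).comp_sub_right _).const_mul _

lemma my_gaussianReal_conv (v1 v2 : ℝ≥0) :
    (gaussianReal 0 v1).conv (gaussianReal 0 v2) = gaussianReal 0 (v1 + v2) := by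
  by_cases h1 : v1 = 0
  · subst h1; rw [gaussianReal_zero_var, zero_add]; exact Measure.dirac_zero_conv _
  by_cases h2 : v2 = 0
  · subst h2; rw [gaussianReal_zero_var, add_zero]; exact Measure.conv_dirac_zero _
  have h12 : v1 + v2 ≠ 0 := by simp [h1]
  rw [gaussianReal_of_var_ne_zero _ h1, gaussianReal_of_var_ne_zero _ h2,
    gaussianReal_of_var_ne_zero _ h12]
  ext s hs
  rw [Measure.conv, Measure.map_apply measurable_add hs,
    Measure.prod_apply (measurable_add hs), withDensity_apply _ hs]
  have step1 : ∀ x : ℝ,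
      (volume.withDensity (gaussianPDF 0 v2)) (Prod.mk x ⁻¹' ((fun p : ℝ × ℝ => p.1 + p.2) ⁻¹' s))
        = ∫⁻ u in s, gaussianPDF 0 v2 (u - x) := by
    intro x
    have hpre : (Prod.mk x ⁻¹' ((fun p : ℝ × ℝ => p.1 + p.2) ⁻¹' s)) = (fun y => x + y) ⁻¹' s := rfl
    rw [hpre, withDensity_apply _ (hs.preimage (measurable_const_add x)),
      ← lintegral_indicator (hs.preimage (measurable_const_add x)) _,
      ← lintegral_indicator hs _]
    have hptw : ∀ y : ℝ, (((fun y => x + y) ⁻¹' s).indicator (gaussianPDF 0 v2)) y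
        = (s.indicator fun u => gaussianPDF 0 v2 (u - x)) (x + y) := by
      intro y
      by_cases h : x + y ∈ s
      · simp [Set.indicator_of_mem, h, Set.mem_preimage.mpr h]
      · simp [Set.indicator_of_notMem, h]
    rw [lintegral_congr hptw, lintegral_add_left_eq_self]
  rw [lintegral_congr step1]
  have hmg2 : Measurable fun p : ℝ × ℝ => gaussianPDF 0 v2 (p.2 - p.1) :=
    (measurable_gaussianPDF 0 v2).comp (measurable_snd.sub measurable_fst)
  have hF : Measurable fun x : ℝ => ∫⁻ u in s, gaussianPDF 0 v2 (u - x) :=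
    Measurable.lintegral_prod_right hmg2
  rw [lintegral_withDensity_eq_lintegral_mul volume (measurable_gaussianPDF 0 v1) hF]
  have step2 : ∀ x : ℝ, gaussianPDF 0 v1 x * ∫⁻ u in s, gaussianPDF 0 v2 (u - x)
      = ∫⁻ u in s, gaussianPDF 0 v1 x * gaussianPDF 0 v2 (u - x) := by
    intro x
    have h : Measurable fun u : ℝ => gaussianPDF 0 v2 (u - x) :=
      (measurable_gaussianPDF 0 v2).comp (measurable_id.sub_const x)
    exact (lintegral_const_mul _ h).symm
  simp only [Pi.mul_apply]
  rw [lintegral_congr step2, lintegral_lintegral_swap]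
  · refine lintegral_congr fun u => ?_
    have : ∀ x : ℝ, gaussianPDF 0 v1 x * gaussianPDF 0 v2 (u - x)
        = ENNReal.ofReal (gaussianPDFReal 0 v1 x * gaussianPDFReal 0 v2 (u - x)) := by
      intro x
      rw [gaussianPDF, gaussianPDF, ← ENNReal.ofReal_mul (gaussianPDFReal_nonneg _ _ _)]
    rw [lintegral_congr this,
      ← MeasureTheory.ofReal_integral_eq_lintegral_ofReal (my_gauss_conv_int v1 v2 h1 h2 u)
        (Filter.Eventually.of_forall fun t =>
          mul_nonneg (gaussianPDFReal_nonneg _ _ _) (gaussianPDFReal_nonneg _ _ _)),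
      my_gauss_pdf_conv v1 v2 h1 h2 u]
    rfl
  · exact ((measurable_gaussianPDF 0 v1).comp measurable_fst |>.mul hmg2).aemeasurable

noncomputable def nnsq (x : ℝ) : ℝ≥0 := ⟨x ^ 2, sq_nonneg x⟩

lemma my_map_add_of_indep {Ω : Type*} [MeasurableSpace Ω] {P : Measure Ω} [IsProbabilityMeasure P]
    {X Y : Ω → ℝ} (hX : Measurable X) (hY : Measurable Y) (h : IndepFun X Y P) :
    Measure.map (fun ω => X ω + Y ω) P = (Measure.map X P).conv (Measure.map Y P) := by
  rw [Measure.conv, ← (indepFun_iff_map_prod_eq_prod_map_map hX.aemeasurable hY.aemeasurable).mp h,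
    Measure.map_map measurable_add (hX.prodMk hY)]
  rfl

lemma my_map_sum_gauss {Ω : Type*} [MeasurableSpace Ω] (P : Measure Ω) [IsProbabilityMeasure P]
    {n : ℕ} (ε : Fin n → Ω → ℝ) (hmeas : ∀ i, Measurable (ε i))
    (hindep : iIndepFun ε P) (v : ℝ≥0)
    (hlaw : ∀ i, Measure.map (ε i) P = gaussianReal 0 v) (c : Fin n → ℝ) (s : Finset (Fin n)) :
    Measure.map (fun ω => ∑ j ∈ s, c j * ε j ω) P
      = gaussianReal 0 (∑ j ∈ s, nnsq (c j) * v) := by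
  classical
  induction s using Finset.cons_induction with
  | empty =>
      simp only [Finset.sum_empty]
      rw [Measure.map_const, measure_univ, one_smul, ← gaussianReal_zero_var 0]
  | cons a s ha ih =>
      have hg : ∀ j, Measurable fun ω => c j * ε j ω := fun j => (hmeas j).const_mul _
      have hgindep : iIndepFun (fun j => fun ω => c j * ε j ω) P :=
        hindep.comp (fun j x => c j * x) (fun j => measurable_const_mul _)
      have hsum_eq : (fun ω => ∑ j ∈ s, c j * ε j ω)
          = ∑ j ∈ s, (fun j => fun ω => c j * ε j ω) j := by
        funext ω; simp [Finset.sum_apply]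
      have hind2 : IndepFun (fun ω => c a * ε a ω) (fun ω => ∑ j ∈ s, c j * ε j ω) P := by
        rw [hsum_eq]
        exact (hgindep.indepFun_finset_sum_of_notMem hg ha).symm
      have hga : Measure.map (fun ω => c a * ε a ω) P
          = gaussianReal 0 (nnsq (c a) * v) := by
        have h0 : (fun ω => c a * ε a ω) = (fun x => c a * x) ∘ ε a := rfl
        rw [h0, ← Measure.map_map (measurable_const_mul _) (hmeas a), hlaw a,
          gaussianReal_map_const_mul, mul_zero]
        rfl
      have hsum : (fun ω => ∑ j ∈ Finset.cons a s ha, c j * ε j ω)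
          = fun ω => (c a * ε a ω) + ∑ j ∈ s, c j * ε j ω := by
        funext ω; rw [Finset.sum_cons]
      rw [hsum, my_map_add_of_indep ((hmeas a).const_mul _)
        (Finset.measurable_sum s (fun j _ => hg j)) hind2, hga, ih, my_gaussianReal_conv,
        Finset.sum_cons]

theorem stmt15 {Ω : Type*} [MeasurableSpace Ω] (P : Measure Ω) [IsProbabilityMeasure P]
    (n : ℕ) (hn : 3 ≤ n) (m : Fin n → ℝ)
    (mbar w : ℝ) (hmbar : mbar = (1 / (n : ℝ)) * ∑ i, m i)
    (hw : w = (1 / (n : ℝ)) * ∑ i, (m i) ^ 2 - mbar ^ 2) (hwpos : 0 < w)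
    (β₀ β₁ σ2 : ℝ) (hσ2 : 0 < σ2)
    (ε : Fin n → Ω → ℝ) (hmeas : ∀ i, Measurable (ε i))
    (hindep : iIndepFun ε P)
    (hlaw : ∀ i, Measure.map (ε i) P = gaussianReal 0 σ2.toNNReal)
    (Y : Fin n → Ω → ℝ) (hY : ∀ i ω, Y i ω = β₀ + β₁ * m i + ε i ω)
    (i : Fin n) :
    Measure.map
        (fun ω =>
          let Ybar := (1 / (n : ℝ)) * ∑ j, Y j ω
          let b1 := w⁻¹ * ((1 / (n : ℝ)) * ∑ j, Y j ω * m j - Ybar * mbar)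
          let b0 := Ybar - b1 * mbar
          Y i ω - b0 - b1 * m i) P
      = gaussianReal 0
          (σ2 * (1 - 1 / (n : ℝ) - (m i - mbar) ^ 2 / ((n : ℝ) * w))).toNNReal := by
  have hN : (n : ℝ) ≠ 0 :=
    Nat.cast_ne_zero.mpr (Nat.lt_of_lt_of_le (by norm_num) hn).ne'
  have hw0 : w ≠ 0 := hwpos.ne'
  have hSm : ∑ j, m j = (n : ℝ) * mbar := by rw [hmbar]; field_simp
  have hSm2 : ∑ j, (m j) ^ 2 = (n : ℝ) * (w + mbar ^ 2) := by rw [hw]; field_simp; ring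
  set c : Fin n → ℝ := fun j =>
    (if j = i then 1 else 0) - 1 / (n : ℝ) - (m i - mbar) * (m j - mbar) / ((n : ℝ) * w) with hc
  have hd : ∑ j, (m j - mbar) = 0 := by
    rw [Finset.sum_sub_distrib, Finset.sum_const, Finset.card_univ, Fintype.card_fin,
      nsmul_eq_mul, hSm, sub_self]
  have hd2 : ∑ j, (m j - mbar) ^ 2 = (n : ℝ) * w := by
    have e : ∀ j : Fin n, (m j - mbar) ^ 2 = (m j) ^ 2 - 2 * mbar * m j + mbar ^ 2 := by
      intro j; ring
    rw [Finset.sum_congr rfl fun j _ => e j]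
    rw [Finset.sum_add_distrib, Finset.sum_sub_distrib, ← Finset.mul_sum, Finset.sum_const,
      Finset.card_univ, Fintype.card_fin, nsmul_eq_mul, hSm, hSm2]
    ring
  have hfun : (fun ω =>
          let Ybar := (1 / (n : ℝ)) * ∑ j, Y j ω
          let b1 := w⁻¹ * ((1 / (n : ℝ)) * ∑ j, Y j ω * m j - Ybar * mbar)
          let b0 := Ybar - b1 * mbar
          Y i ω - b0 - b1 * m i) = fun ω => ∑ j, c j * ε j ω := by
    funext ω
    have h1 : ∑ j, Y j ω = (n : ℝ) * β₀ + β₁ * ((n : ℝ) * mbar) + ∑ j, ε j ω := by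
      simp only [hY]
      rw [Finset.sum_add_distrib, Finset.sum_add_distrib, Finset.sum_const, Finset.card_univ,
        Fintype.card_fin, nsmul_eq_mul, ← Finset.mul_sum, hSm]
    have h2 : ∑ j, Y j ω * m j
        = β₀ * ((n : ℝ) * mbar) + β₁ * ((n : ℝ) * (w + mbar ^ 2)) + ∑ j, ε j ω * m j := by
      have e : ∀ j : Fin n, Y j ω * m j = β₀ * m j + β₁ * (m j) ^ 2 + ε j ω * m j := by
        intro j; rw [hY]; ring
      rw [Finset.sum_congr rfl fun j _ => e j, Finset.sum_add_distrib, Finset.sum_add_distrib,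
        ← Finset.mul_sum, ← Finset.mul_sum, hSm, hSm2]
    have h3 : ∑ j, c j * ε j ω = ε i ω - (1 / (n : ℝ)) * ∑ j, ε j ω
        - ((m i - mbar) / ((n : ℝ) * w)) * ((∑ j, ε j ω * m j) - mbar * ∑ j, ε j ω) := by
      have e : ∀ j : Fin n, c j * ε j ω = (if j = i then ε j ω else 0)
          - (1 / (n : ℝ)) * ε j ω
          - ((m i - mbar) / ((n : ℝ) * w)) * (ε j ω * m j - mbar * ε j ω) := by
        intro j
        by_cases h : j = i <;> simp only [hc, h, if_true, if_false] <;> ring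
      rw [Finset.sum_congr rfl fun j _ => e j, Finset.sum_sub_distrib, Finset.sum_sub_distrib,
        ← Finset.mul_sum, ← Finset.mul_sum, Finset.sum_ite_eq' Finset.univ i,
        if_pos (Finset.mem_univ i), Finset.sum_sub_distrib, ← Finset.mul_sum]
    show Y i ω - _ - _ = _
    rw [h3, hY i ω, h1, h2]
    field_simp
    ring
  have hvar : σ2 * (1 - 1 / (n : ℝ) - (m i - mbar) ^ 2 / ((n : ℝ) * w))
      = ∑ j, (c j) ^ 2 * σ2 := by
    have e : ∀ j : Fin n, (c j) ^ 2
        = (if j = i then 1 - 2 * (1 / (n : ℝ) + (m i - mbar) / ((n : ℝ) * w) * (m j - mbar)) else 0)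
          + (1 / (n : ℝ) ^ 2 + 2 * ((m i - mbar) / ((n : ℝ) * w) / (n : ℝ)) * (m j - mbar)
            + ((m i - mbar) / ((n : ℝ) * w)) ^ 2 * (m j - mbar) ^ 2) := by
      intro j
      by_cases h : j = i <;> simp only [hc, h, if_true, if_false] <;> field_simp <;> ring
    rw [← Finset.sum_mul]
    rw [Finset.sum_congr rfl fun j _ => e j, Finset.sum_add_distrib,
      Finset.sum_ite_eq' Finset.univ i, if_pos (Finset.mem_univ i), Finset.sum_add_distrib,
      Finset.sum_add_distrib, ← Finset.mul_sum, ← Finset.mul_sum, hd, hd2, Finset.sum_const,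
      Finset.card_univ, Fintype.card_fin, nsmul_eq_mul]
    field_simp
    ring
  rw [hfun, my_map_sum_gauss P ε hmeas hindep σ2.toNNReal hlaw c Finset.univ]
  congr 1
  have hnn : 0 ≤ σ2 * (1 - 1 / (n : ℝ) - (m i - mbar) ^ 2 / ((n : ℝ) * w)) := by
    rw [hvar]; positivity
  apply NNReal.coe_injective
  rw [Real.coe_toNNReal _ hnn, hvar, NNReal.coe_sum]
  refine Finset.sum_congr rfl fun j _ => ?_
  rw [NNReal.coe_mul, Real.coe_toNNReal _ hσ2.le]
  rfl
end
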